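/- For every reduced parallelogram polyomino P of size m × n, the bounce statistic of P equals the pmaj statistic of the two-cars parking function ψ(P) obtained from P via the area-word bijection: bounce(P) = pmaj(ψ(P)). -/

import Mathlib

open Finset

/-! ## Lattice-path preliminaries for parallelogram polyominoes.
Paths are lists of booleans: `true` = north step, `false` = east step. -/

/-- Interlacing `D = (r₁, 1-g₁, r₂, 1-g₂, …)` of the red path and the complemented green path. -/
def interlace : List Bool → List Bool → List Bool
  | [], _ => []
  | _ :: _, [] => []
  | a :: as, b :: bs => a :: (!b) :: interlace as bs

/-- Reading levels along a 0/1 word: on a `true` record the current level and go up one level,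
on a `false` go down one level (recording nothing). -/
def levels : List Bool → ℕ → List ℕ
  | [], _ => []
  | true :: rest, l => l :: levels rest (l + 1)
  | false :: rest, l => levels rest (l - 1)

def countTrue (l : List Bool) : ℕ := (l.filter fun b => b = true).length
def countFalse (l : List Bool) : ℕ := (l.filter fun b => b = false).length

/-- The number of `true`s (north steps) occurring before the `(x+1)`-st `false` (east step):
the height of the path along the column `x ↦ x+1`. -/
def colHeight : List Bool → ℕ → ℕ
  | [], _ => 0
  | true :: rest, k => colHeight rest k + 1
  | false :: _, 0 => 0
  | false :: rest, k + 1 => colHeight rest k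

/-- The number of `false`s (east steps) occurring before the `(y+1)`-st `true` (north step). -/
def colX (p : List Bool) (y : ℕ) : ℕ := colHeight (p.map fun b => !b) y

/-- `r` and `g` are the red (upper) and green (lower) boundary paths of an `m × n`
parallelogram polyomino: both go from `(0,0)` to `(m,n)` and the red one stays strictly
above the green one except at the endpoints. -/
def IsPolyo (m n : ℕ) (r g : List Bool) : Prop :=
  r.length = m + n ∧ g.length = m + n ∧ countTrue r = n ∧ countTrue g = n ∧
    ∀ i : ℕ, 1 ≤ i → i < m + n → countTrue (g.take i) < countTrue (r.take i)

/-- Reduced parallelogram polyomino: the red path stays weakly above the green one. -/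
def IsRPolyo (m n : ℕ) (r g : List Bool) : Prop :=
  r.length = m + n ∧ g.length = m + n ∧ countTrue r = n ∧ countTrue g = n ∧
    ∀ i : ℕ, countTrue (g.take i) ≤ countTrue (r.take i)

/-- The area word of a (standard) parallelogram polyomino, as the list of letters of the
alphabet `0̄ < 1 < 1̄ < 2 < 2̄ < ⋯` encoded by their indices `0, 1, 2, 3, 4, …`.
Barred letters have even index, unbarred letters odd index. -/
def areaWord (r g : List Bool) : List ℕ := levels (interlace r g) 0

/-- The numerical value of the letter with index `j` in the alphabet `0̄ < 1 < 1̄ < 2 < ⋯`. -/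
def wval (j : ℕ) : ℕ := (j + 1) / 2

/-- The number of unit cells strictly between the two boundary paths. -/
def cellArea (m : ℕ) (r g : List Bool) : ℕ :=
  ∑ x ∈ Finset.range m, (colHeight r x - colHeight g x)

/-- `area` as the sum of the values of the letters of the area word. -/
def areaStat (r g : List Bool) : ℕ := ((areaWord r g).map wval).sum

/-- `dinv`: the number of pairs of letters of the area word such that the rightmost letter is
the successor (in the alphabet `0̄ < 1 < 1̄ < ⋯`) of the leftmost one. -/
def dinvStat (r g : List Bool) : ℕ :=
  ((Finset.range (areaWord r g).length ×ˢ Finset.range (areaWord r g).length).filter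
    fun p => p.1 < p.2 ∧ (areaWord r g).getD p.2 0 = (areaWord r g).getD p.1 0 + 1).card

/-- A rise of the area word: a barred letter immediately followed by its successor. -/
def IsRise (w : List ℕ) (i : ℕ) : Prop :=
  i + 1 < w.length ∧ w.getD i 0 % 2 = 0 ∧ w.getD (i + 1) 0 = w.getD i 0 + 1

/-- `underlined area`: the sum of the values of the letters of the area word, ignoring the
(barred) letters at the decorated positions `D`. -/
def uareaStat (r g : List Bool) (D : Finset ℕ) : ℕ :=
  ∑ i ∈ Finset.range (areaWord r g).length \ D, wval ((areaWord r g).getD i 0)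

/-! ### Reduced polyominoes, their bounce, and the `pmaj` of parking functions. -/

/-- The area word of a reduced parallelogram polyomino, with the initial artificial `0`,
as the list of letters of the alphabet `0 < 0̄ < 1 < 1̄ < 2 < ⋯` encoded by their indices.
Barred letters have odd index; the letter of index `j` has value `j / 2`. -/
def areaWordR (r g : List Bool) : List ℕ := 0 :: levels (interlace r g) 1

/-- Auxiliary computation of the bounce path of a reduced parallelogram polyomino: from
`(x, y)` travel east to the start of the vertical green step at height `y`, then north to the
start of the horizontal red step at the new abscissa, and repeat.  Returns the list of the
lengths of the successive (east, north, east, north, …) runs. -/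
def bRunsRedAux (r g : List Bool) : ℕ → ℕ → ℕ → List ℕ
  | 0, _, _ => []
  | fuel + 1, x, y =>
    let x' := colX g y
    let y' := colHeight r x'
    if x' = x ∧ y' = y then []
    else (x' - x) :: (y' - y) :: bRunsRedAux r g fuel x' y'

/-- The `bounce` statistic of a reduced parallelogram polyomino: the letters of the bounce
word on the `j`-th run of the bounce path have value `j / 2` in the alphabet
`0 < 0̄ < 1 < 1̄ < 2 < ⋯`. -/
def bounceRed (r g : List Bool) : ℕ :=
  ∑ j ∈ Finset.range (bRunsRedAux r g (r.length + 1) 0 0).length,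
    (j / 2) * (bRunsRedAux r g (r.length + 1) 0 0).getD j 0

/-- The major index of a word: the sum of the (1-indexed) positions of the descents. -/
def majL (l : List ℕ) : ℕ :=
  ∑ i ∈ Finset.range (l.length - 1), if l.getD (i + 1) 0 < l.getD i 0 then i + 1 else 0

/-- The `pmaj` word `w₁ w₂ ⋯` of a parking function, given the list of multisets of labels in
its successive columns: `C₁` is the multiset of labels of the first column and `w₁ = max C₁`;
at step `i`, `Cᵢ` is obtained from `Cᵢ₋₁` by removing `wᵢ₋₁` and adding the labels of the
`i`-th column, and `wᵢ` is the largest element of `Cᵢ` not exceeding `wᵢ₋₁` if one exists,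
and the maximum of `Cᵢ` otherwise. -/
def pmajGo : List (Multiset ℕ) → Multiset ℕ → Option ℕ → List ℕ
  | [], _, _ => []
  | col :: rest, C, wprev =>
    let C' := (match wprev with | none => C | some w => C.erase w) + col
    let w := match wprev with
      | none => C'.sup
      | some wp => if C'.filter (fun x => x ≤ wp) = 0 then C'.sup
                   else (C'.filter fun x => x ≤ wp).sup
    w :: pmajGo rest C' (some w)

/-- `pmaj`: the major index of the reversed `pmaj` word. -/
def pmajOfCols (cols : List (Multiset ℕ)) : ℕ := majL (pmajGo cols 0 none).reverse

/-- The columns of the two-cars parking function `ψ(P)` associated to a reduced parallelogram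
polyomino: the `i`-th letter (artificial `0` removed) of the area word gives a row with
area-word value `⌊j/2⌋` and label `1` if the letter is barred (odd index) and `2` otherwise;
the row `i` lies in column `i - bᵢ`. -/
def psiCols (r g : List Bool) : List (Multiset ℕ) :=
  (List.range (areaWordR r g).tail.length).map fun c =>
    (((Finset.range (areaWordR r g).tail.length).filter fun i =>
        i - ((areaWordR r g).tail.getD i 0) / 2 = c).val.map
      fun i => if ((areaWordR r g).tail.getD i 0) % 2 = 1 then 1 else 2)

/-!
Column `c` of `ψ(P)` receives a label `1` when the red path makes a north step at position `c`
and a label `2` when the green path makes an east step there. With only these two labels, the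
`pmaj` algorithm repeats its previous letter as long as that label is still available and
switches to the other one otherwise. Once `x` twos and `y` ones have been read from the first
`x + y + 1` columns, a `2` is still available iff `x < colX g y` and a `1` iff
`y < colHeight r x`: exactly the conditions for the bounce path at `(x, y)` to go on east,
resp. north. So the `pmaj` word reads `2` along the east runs and `1` along the north runs of
the bounce path. Its reversal has a descent exactly where a north run meets the next east run,
at the number of letters after that north run; summing these gives
`∑ⱼ ⌊j/2⌋ · (length of the j-th run)`, which is the bounce.
-/

section PathCounts

@[simp] lemma countTrue_nil : countTrue [] = 0 := rfl
@[simp] lemma countFalse_nil : countFalse [] = 0 := rfl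

@[simp] lemma countTrue_cons (b : Bool) (l : List Bool) :
    countTrue (b :: l) = countTrue l + if b then 1 else 0 := by
  cases b <;> simp [countTrue]

@[simp] lemma countFalse_cons (b : Bool) (l : List Bool) :
    countFalse (b :: l) = countFalse l + if b then 0 else 1 := by
  cases b <;> simp [countFalse]

lemma countTrue_add_countFalse (l : List Bool) : countTrue l + countFalse l = l.length := by
  induction l with
  | nil => rfl
  | cons b l ih => cases b <;> simp <;> omega

lemma countTrue_map_not (l : List Bool) : countTrue (l.map fun b => !b) = countFalse l := by
  induction l with
  | nil => rfl
  | cons b l ih => cases b <;> simp [ih]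

lemma countTrue_le_length (l : List Bool) : countTrue l ≤ l.length := by
  have := countTrue_add_countFalse l
  omega

lemma countTrue_take_succ (p : List Bool) (t : ℕ) :
    countTrue (p.take (t + 1)) = countTrue (p.take t) + if p.getD t false then 1 else 0 := by
  induction p generalizing t with
  | nil => simp
  | cons b l ih =>
    cases t with
    | zero => simp
    | succ t => simp only [List.take_succ_cons, countTrue_cons, List.getD_cons_succ, ih]; omega

lemma countFalse_take_succ (p : List Bool) {t : ℕ} (ht : t < p.length) :
    countFalse (p.take (t + 1)) = countFalse (p.take t) + if p.getD t false then 0 else 1 := by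
  induction p generalizing t with
  | nil => simp at ht
  | cons b l ih =>
    cases t with
    | zero => simp
    | succ t =>
      simp only [List.take_succ_cons, countFalse_cons, List.getD_cons_succ,
        ih (Nat.lt_of_succ_lt_succ ht)]
      omega

lemma countTrue_take_mono (p : List Bool) : Monotone fun t => countTrue (p.take t) :=
  fun _ _ h => ((List.take_prefix_take_left h).sublist.filter _).length_le

lemma countFalse_take_mono (p : List Bool) : Monotone fun t => countFalse (p.take t) :=
  fun _ _ h => ((List.take_prefix_take_left h).sublist.filter _).length_le

lemma countTrue_take_le (p : List Bool) (t : ℕ) : countTrue (p.take t) ≤ countTrue p :=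
  ((p.take_sublist t).filter _).length_le

lemma countTrue_take_add_countFalse_take (p : List Bool) (t : ℕ) :
    countTrue (p.take t) + countFalse (p.take t) = min t p.length := by
  rw [countTrue_add_countFalse, List.length_take]

lemma countFalse_take_le (p : List Bool) (t : ℕ) : countFalse (p.take t) ≤ countFalse p :=
  ((p.take_sublist t).filter _).length_le

end PathCounts

section ColumnHeights

lemma colHeight_le_countTrue (p : List Bool) (x : ℕ) : colHeight p x ≤ countTrue p := by
  induction p generalizing x with
  | nil => simp [colHeight]
  | cons b l ih =>
    cases b
    · cases x with
      | zero => simp [colHeight]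
      | succ x => simpa [colHeight] using ih x
    · simpa [colHeight] using ih x

lemma colHeight_mono (p : List Bool) : Monotone (colHeight p) := by
  intro x x' h
  induction p generalizing x x' with
  | nil => simp [colHeight]
  | cons b l ih =>
    cases b
    · cases x with
      | zero => simp [colHeight]
      | succ x =>
        cases x' with
        | zero => omega
        | succ x' => exact ih (Nat.le_of_succ_le_succ h)
    · exact Nat.add_le_add_right (ih h) 1

theorem lt_colHeight_iff (p : List Bool) (x y : ℕ) :
    y < colHeight p x ↔ y < countTrue (p.take (x + y + 1)) := by
  induction p generalizing x y with
  | nil => simp [colHeight]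
  | cons b l ih =>
    cases b with
    | true =>
      cases y with
      | zero => simp [colHeight]
      | succ y =>
        simp only [colHeight, show x + (y + 1) + 1 = x + y + 1 + 1 by omega, List.take_succ_cons,
          countTrue_cons, if_true]
        have := ih x y
        omega
    | false =>
      cases x with
      | zero =>
        have := (countTrue_le_length (l.take y)).trans (List.length_take_le y l)
        simpa [colHeight] using this
      | succ x =>
        simpa only [colHeight, show x + 1 + y + 1 = x + y + 1 + 1 by omega, List.take_succ_cons,
          countTrue_cons, Bool.false_eq_true, if_false, add_zero] using ih x y

lemma colX_le_countFalse (p : List Bool) (y : ℕ) : colX p y ≤ countFalse p :=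
  countTrue_map_not p ▸ colHeight_le_countTrue _ y

lemma colX_mono (p : List Bool) : Monotone (colX p) := colHeight_mono _

theorem lt_colX_iff (p : List Bool) (x y : ℕ) :
    x < colX p y ↔ x < countFalse (p.take (x + y + 1)) := by
  rw [colX, lt_colHeight_iff, ← List.map_take, countTrue_map_not, Nat.add_comm y x]

lemma le_countTrue_take_of_le_colHeight {p : List Bool} {x y : ℕ} (h : y ≤ colHeight p x) :
    y ≤ countTrue (p.take (x + y)) := by
  cases y with
  | zero => exact Nat.zero_le _
  | succ y => exact (lt_colHeight_iff p x y).1 h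

lemma le_countFalse_take_of_le_colX {p : List Bool} {x y : ℕ} (h : x ≤ colX p y) :
    x ≤ countFalse (p.take (x + y)) := by
  cases x with
  | zero => exact Nat.zero_le _
  | succ x => rw [Nat.add_right_comm]; exact (lt_colX_iff p x y).1 h

lemma countTrue_take_le_of_colHeight_le {p : List Bool} {x y : ℕ} (h : colHeight p x ≤ y) :
    countTrue (p.take (x + y + 1)) ≤ y :=
  Nat.le_of_not_lt ((lt_colHeight_iff p x y).not.1 h.not_gt)

lemma countFalse_take_le_of_colX_le {p : List Bool} {x y : ℕ} (h : colX p y ≤ x) :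
    countFalse (p.take (x + y + 1)) ≤ x :=
  Nat.le_of_not_lt ((lt_colX_iff p x y).not.1 h.not_gt)

end ColumnHeights

section MajorIndex

lemma majL_concat (X : List ℕ) (a : ℕ) :
    majL (X ++ [a]) = majL X + if a < X.getLastD a then X.length else 0 := by
  rcases List.eq_nil_or_concat X with rfl | ⟨Y, b, rfl⟩
  · simp [majL]
  · rw [List.concat_eq_append]
    unfold majL
    simp only [List.length_append, List.length_singleton, Nat.add_sub_cancel]
    rw [Finset.sum_range_succ]
    congr 1
    · refine Finset.sum_congr rfl fun i hi => ?_
      rw [mem_range] at hi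
      rw [List.getD_append _ _ _ (i + 1) (by simp; omega),
        List.getD_append _ _ _ i (by simp; omega)]
    · rw [List.getD_append_right _ _ _ _ (by simp), List.getD_append _ _ _ _ (by simp)]
      simp

lemma majL_reverse_cons (a : ℕ) (l : List ℕ) :
    majL (a :: l).reverse = majL l.reverse + if a < l.headD a then l.length else 0 := by
  rw [List.reverse_cons, majL_concat, List.length_reverse]
  simp [List.getLastD_eq_getLast?, List.getLast?_reverse]

lemma majL_reverse_replicate_append (k a : ℕ) (l : List ℕ) :
    majL (List.replicate k a ++ l).reverse
      = majL l.reverse + if 0 < k ∧ a < l.headD a then l.length else 0 := by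
  induction k with
  | zero => simp
  | succ k ih =>
    rw [List.replicate_succ, List.cons_append, majL_reverse_cons, ih]
    cases k <;> simp [List.replicate_succ]

end MajorIndex

section BounceWord

/-- The word of a bounce path with run lengths `e₁, n₁, e₂, n₂, …`: a `2` for each east
step and a `1` for each north step. -/
def bounceWord : List ℕ → List ℕ
  | e :: n :: rest => List.replicate e 2 ++ List.replicate n 1 ++ bounceWord rest
  | _ => []

def InnerRunsPos : List ℕ → Prop
  | [] => True
  | [_] => False
  | _ :: n :: rest => InnerRunsPos rest ∧ (rest ≠ [] → 0 < n ∧ 0 < rest.headD 0)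

def bounceOfRuns (runs : List ℕ) : ℕ :=
  ∑ j ∈ range runs.length, (j / 2) * runs.getD j 0

lemma sum_range_getD (l : List ℕ) : ∑ j ∈ range l.length, l.getD j 0 = l.sum := by
  induction l with
  | nil => simp
  | cons a l ih => rw [List.length_cons, sum_range_succ', List.sum_cons, ← ih]; simp [add_comm]

lemma bounceOfRuns_cons_cons (e n : ℕ) (rest : List ℕ) :
    bounceOfRuns (e :: n :: rest) = bounceOfRuns rest + rest.sum := by
  simp only [bounceOfRuns, List.length_cons, sum_range_succ', List.getD_cons_succ,
    List.getD_cons_zero, ← sum_range_getD rest, ← sum_add_distrib, Nat.zero_div, zero_mul,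
    add_zero]
  rw [show (0 + 1) / 2 = 0 from rfl, zero_mul, add_zero]
  refine Finset.sum_congr rfl fun j _ => ?_
  rw [show (j + 1 + 1) / 2 = j / 2 + 1 by omega]
  ring

lemma bounceWord_length :
    ∀ runs : List ℕ, InnerRunsPos runs → (bounceWord runs).length = runs.sum
  | [], _ => rfl
  | [_], h => h.elim
  | e :: n :: rest, h => by
    simp only [bounceWord, List.length_append, List.length_replicate,
      bounceWord_length rest h.1, List.sum_cons]
    ring

theorem majL_reverse_bounceWord :
    ∀ runs : List ℕ, InnerRunsPos runs → majL (bounceWord runs).reverse = bounceOfRuns runs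
  | [], _ => by simp [bounceWord, bounceOfRuns, majL]
  | [_], h => h.elim
  | e :: n :: rest, ⟨hrest, hpos⟩ => by
    rw [bounceOfRuns_cons_cons, ← majL_reverse_bounceWord rest hrest, bounceWord,
      List.append_assoc, majL_reverse_replicate_append, majL_reverse_replicate_append,
      bounceWord_length rest hrest]
    match rest, hrest, hpos with
    | [], _, _ => cases n <;> simp [bounceWord, List.replicate_succ]
    | e' :: n' :: rest', _, hpos =>
      obtain ⟨hn, he'⟩ := hpos (List.cons_ne_nil _ _)
      obtain ⟨e', rfl⟩ := Nat.exists_eq_add_of_lt he'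
      obtain ⟨n, rfl⟩ := Nat.exists_eq_add_of_lt hn
      simp [bounceWord, List.replicate_succ]
end BounceWord

section PsiColumns

def stepLabels (a b : Bool) : List ℕ := (if a then [1] else []) ++ (if b then [] else [2])

/-- The (column of `ψ(P)`, label) pairs of the letters of the area word, read off the two
paths from position `c` on. -/
def labelledSteps : List Bool → List Bool → ℕ → List (ℕ × ℕ)
  | a :: as, b :: bs, c => (stepLabels a b).map (c, ·) ++ labelledSteps as bs (c + 1)
  | _, _, _ => []

lemma le_fst_of_mem_labelledSteps :
    ∀ {r g : List Bool} {c : ℕ} {e : ℕ × ℕ}, e ∈ labelledSteps r g c → c ≤ e.1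
  | _ :: _, _ :: _, c, e, he => by
    rw [labelledSteps, List.mem_append, List.mem_map] at he
    rcases he with ⟨_, _, rfl⟩ | he
    · exact le_rfl
    · exact Nat.le_of_succ_le (le_fst_of_mem_labelledSteps he)
  | [], _, _, _, he => by simp [labelledSteps] at he
  | _ :: _, [], _, _, he => by simp [labelledSteps] at he

lemma labelledSteps_filter :
    ∀ (r g : List Bool) (c₀ c : ℕ), c < r.length → c < g.length →
      (labelledSteps r g c₀).filter (·.1 = c₀ + c)
        = (stepLabels (r.getD c false) (g.getD c false)).map (c₀ + c, ·)
  | a :: as, b :: bs, c₀, 0, _, _ => by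
    rw [labelledSteps, List.filter_append, List.filter_eq_self.2 (by simp),
      List.filter_eq_nil_iff.2 fun e he => by
        have := le_fst_of_mem_labelledSteps he
        simp only [decide_eq_true_eq]; omega]
    simp
  | a :: as, b :: bs, c₀, c + 1, hr, hg => by
    rw [labelledSteps, List.filter_append, List.filter_eq_nil_iff.2 (by simp),
      show c₀ + (c + 1) = c₀ + 1 + c by omega,
      labelledSteps_filter as bs (c₀ + 1) c (by simpa using hr) (by simpa using hg)]
    simp
  | [], _, _, _, hr, _ => by simp at hr
  | _ :: _, [], _, _, _, hg => by simp at hg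

/-- `p` is the number of north steps by which the red path leads the green one: the level
before their steps at position `c` is `1 + 2p`, and the `i`-th letter `j` they produce lands in
column `i - ⌊j/2⌋ = c`. -/
theorem mapIdx_levels_interlace : ∀ (r g : List Bool) (p c₀ : ℕ),
    (∀ t, countTrue (g.take t) ≤ p + countTrue (r.take t)) →
    (levels (interlace r g) (1 + 2 * p)).mapIdx
        (fun i j => (c₀ + p + i - j / 2, if j % 2 = 1 then 1 else 2))
      = labelledSteps r g c₀
  | [], _, _, _, _ => by simp [interlace, levels, labelledSteps]
  | a :: as, [], _, _, _ => by cases a <;> simp [interlace, levels, labelledSteps]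
  | a :: as, b :: bs, p, c₀, hdom => by
    have hdom' (t : ℕ) := hdom (t + 1)
    have hp := hdom 1
    simp only [List.take_succ_cons, countTrue_cons, List.take_zero, countTrue_nil] at hdom' hp
    cases a <;> cases b <;>
      simp only [Bool.false_eq_true, if_true, if_false, add_zero, zero_add] at hdom' hp <;>
      simp only [interlace, Bool.not_false, Bool.not_true, levels, labelledSteps, stepLabels,
        Bool.false_eq_true, if_true, if_false, List.mapIdx_cons, List.append_nil, List.nil_append,
        List.map_nil, List.map_cons, List.cons_append]
    · rw [← mapIdx_levels_interlace as bs p (c₀ + 1) fun t => by have := hdom' t; omega,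
        show 1 + 2 * p - 1 + 1 = 1 + 2 * p by omega]
      congr 1
      · congr 1 <;> first | omega | (split <;> omega)
      · congr 1; funext i j; congr 1; omega
    · rw [← mapIdx_levels_interlace as bs (p - 1) (c₀ + 1) fun t => by have := hdom' t; omega,
        show 1 + 2 * p - 1 - 1 = 1 + 2 * (p - 1) by omega]
      congr 1; funext i j; congr 1; omega
    · rw [← mapIdx_levels_interlace as bs (p + 1) (c₀ + 1) fun t => by have := hdom' t; omega,
        show 1 + 2 * p + 1 + 1 = 1 + 2 * (p + 1) by omega]
      congr 1
      · congr 1 <;> first | omega | (split <;> omega)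
      congr 1
      · congr 1 <;> first | omega | (split <;> omega)
      · congr 1; funext i j; congr 1; omega
    · rw [← mapIdx_levels_interlace as bs p (c₀ + 1) fun t => by have := hdom' t; omega,
        show 1 + 2 * p + 1 - 1 = 1 + 2 * p by omega]
      congr 1
      · congr 1 <;> first | omega | (split <;> omega)
      · congr 1; funext i j; congr 1; omega

lemma length_levels : ∀ (u : List Bool) (l : ℕ), (levels u l).length = countTrue u
  | [], _ => rfl
  | true :: u, l => by simp [levels, length_levels u]
  | false :: u, l => by simp [levels, length_levels u]

lemma countTrue_interlace : ∀ (r g : List Bool), r.length = g.length →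
    countTrue (interlace r g) = countTrue r + countFalse g
  | [], [], _ => rfl
  | a :: as, b :: bs, h => by
    have := countTrue_interlace as bs (by simpa using h)
    cases a <;> cases b <;> simp [interlace, this] <;> omega

lemma List.mapIdx_eq_map_range {α β : Type*} (w : List α) (d : α) (F : ℕ → α → β) :
    w.mapIdx F = (List.range w.length).map fun i => F i (w.getD i d) :=
  List.ext_getElem (by simp) fun i h₁ _ => by
    simp [List.getElem?_eq_getElem (by simpa using h₁ : i < w.length)]

def labelColumns (r g : List Bool) (N : ℕ) : List (Multiset ℕ) :=
  (List.range N).map fun c => (stepLabels (r.getD c false) (g.getD c false) : Multiset ℕ)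

theorem psiCols_eq {m n : ℕ} {r g : List Bool} (h : IsRPolyo m n r g) :
    psiCols r g = labelColumns r g (m + n) := by
  obtain ⟨hrl, hgl, hrt, hgt, hdom⟩ := h
  have hsteps := mapIdx_levels_interlace r g 0 0 (by simpa using hdom)
  set w := levels (interlace r g) 1
  have hw : w.length = m + n := by
    have := countTrue_add_countFalse g
    rw [length_levels, countTrue_interlace r g (by omega)]
    omega
  rw [List.mapIdx_eq_map_range _ 0, hw] at hsteps
  unfold psiCols
  rw [show (areaWordR r g).tail = w from rfl, hw]
  refine List.map_congr_left fun c hc => ?_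
  rw [List.mem_range] at hc
  have := congrArg (fun l => (l.filter (·.1 = 0 + c)).map Prod.snd) hsteps
  simp only [labelledSteps_filter r g 0 c (by omega) (by omega), List.filter_map,
    List.map_map] at this
  simp only [Finset.filter_val, Finset.range_val, Multiset.range, Multiset.filter_coe,
    Multiset.map_coe]
  congr 1
  simpa [Function.comp_def] using this

end PsiColumns

section PmajChoice

lemma pmajGo_zero_none {cols : List (Multiset ℕ)} {w : ℕ}
    (h : ∀ col ∈ cols, ∀ a ∈ col, a ≤ w) :
    pmajGo cols 0 none = pmajGo cols {w} (some w) := by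
  cases cols with
  | nil => rfl
  | cons col rest =>
    simp [pmajGo, Multiset.filter_eq_self.2 (h col List.mem_cons_self)]

lemma pmajGo_cons_some {col C : Multiset ℕ} {rest : List (Multiset ℕ)} {w v : ℕ}
    (hv : v ∈ C.erase w + col) (h : w = v ∨ ∀ a ∈ C.erase w + col, a = v) :
    pmajGo (col :: rest) C (some w) = v :: pmajGo rest (C.erase w + col) (some v) := by
  set C' := C.erase w + col
  have sup_eq {s : Multiset ℕ} (hvs : v ∈ s) (hle : ∀ a ∈ s, a ≤ v) : s.sup = v :=
    le_antisymm (Multiset.sup_le.2 hle) (Multiset.le_sup hvs)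
  suffices (if C'.filter (· ≤ w) = 0 then C'.sup else (C'.filter (· ≤ w)).sup) = v by
    simp only [pmajGo, C', this]
  rcases h with rfl | hall
  · have hmem : w ∈ C'.filter (· ≤ w) := Multiset.mem_filter.2 ⟨hv, le_rfl⟩
    rw [if_neg fun h0 => by simp [h0] at hmem]
    exact sup_eq hmem fun a ha => (Multiset.mem_filter.1 ha).2
  · split_ifs with hfil
    · exact sup_eq hv fun a ha => (hall a ha).le
    · obtain ⟨a, ha⟩ := Multiset.exists_mem_of_ne_zero hfil
      have hva := hall a (Multiset.mem_of_mem_filter ha)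
      exact sup_eq (hva ▸ ha) fun b hb => (hall b (Multiset.mem_of_mem_filter hb)).le

end PmajChoice

section Walk

/-- The labels of the first `x + y` columns not yet read by a `pmaj` word containing `x` twos
and `y` ones. -/
def unusedLabels (r g : List Bool) (x y : ℕ) : Multiset ℕ :=
  Multiset.replicate (countTrue (r.take (x + y)) - y) 1
    + Multiset.replicate (countFalse (g.take (x + y)) - x) 2

lemma coe_stepLabels (a b : Bool) :
    (stepLabels a b : Multiset ℕ)
      = Multiset.replicate (if a then 1 else 0) 1 + Multiset.replicate (if b then 0 else 1) 2 := by
  cases a <;> cases b <;> rfl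

lemma le_two_of_mem_labelColumns {r g : List Bool} {N : ℕ} :
    ∀ col ∈ labelColumns r g N, ∀ a ∈ col, a ≤ 2 := by
  simp only [labelColumns, List.mem_map, List.mem_range]
  rintro _ ⟨c, -, rfl⟩ a ha
  rw [coe_stepLabels, Multiset.mem_add, Multiset.mem_replicate, Multiset.mem_replicate] at ha
  omega

lemma drop_labelColumns {r g : List Bool} {N t : ℕ} (ht : t < N) :
    (labelColumns r g N).drop t
      = (stepLabels (r.getD t false) (g.getD t false) : Multiset ℕ)
          :: (labelColumns r g N).drop (t + 1) := by
  rw [List.drop_eq_getElem_cons (by simpa [labelColumns] using ht)]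
  simp [labelColumns]

lemma unusedLabels_add_stepLabels {r g : List Bool} {x y : ℕ}
    (hy : y ≤ countTrue (r.take (x + y))) (hx : x ≤ countFalse (g.take (x + y)))
    (ht : x + y < g.length) :
    unusedLabels r g x y + (stepLabels (r.getD (x + y) false) (g.getD (x + y) false) : Multiset ℕ)
      = Multiset.replicate (countTrue (r.take (x + y + 1)) - y) 1
          + Multiset.replicate (countFalse (g.take (x + y + 1)) - x) 2 := by
  rw [countTrue_take_succ, countFalse_take_succ g ht, coe_stepLabels, unusedLabels,
    Nat.sub_add_comm hy, Nat.sub_add_comm hx, Multiset.replicate_add, Multiset.replicate_add]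
  abel

variable {m n : ℕ} {r g : List Bool}

lemma IsRPolyo.countFalse_green (hP : IsRPolyo m n r g) : countFalse g = m := by
  have := countTrue_add_countFalse g
  rw [hP.2.1, hP.2.2.2.1] at this
  omega

lemma IsRPolyo.colX_le (hP : IsRPolyo m n r g) (y : ℕ) : colX g y ≤ m :=
  hP.countFalse_green ▸ colX_le_countFalse g y

lemma IsRPolyo.colHeight_le (hP : IsRPolyo m n r g) (x : ℕ) : colHeight r x ≤ n :=
  hP.2.2.1 ▸ colHeight_le_countTrue r x

/-- The only corner of the bounce path where it cannot move on is `(m, n)`: elsewhere the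
red path would have to pass below the green one. -/
lemma IsRPolyo.eq_of_colX_eq_of_colHeight_eq (hP : IsRPolyo m n r g) {x y : ℕ}
    (hx : colX g y = x) (hy : colHeight r x = y) : x = m ∧ y = n := by
  have hxm := hP.colX_le y
  have hyn := hP.colHeight_le x
  obtain ⟨-, hgl, -, -, hdom⟩ := hP
  have hE := countFalse_take_le_of_colX_le hx.le
  have hN := countTrue_take_le_of_colHeight_le hy.le
  have hG := countTrue_take_add_countFalse_take g (x + y + 1)
  have := hdom (x + y + 1)
  omega


lemma IsRPolyo.pmajGo_east_step (hP : IsRPolyo m n r g) {x y w : ℕ}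
    (hy : y ≤ countTrue (r.take (x + y))) (hx : x < countFalse (g.take (x + y + 1)))
    (hw : w = 2 ∨ countTrue (r.take (x + y + 1)) ≤ y) :
    pmajGo ((labelColumns r g (m + n)).drop (x + y)) (w ::ₘ unusedLabels r g x y) (some w)
      = 2 :: pmajGo ((labelColumns r g (m + n)).drop (x + 1 + y))
          (2 ::ₘ unusedLabels r g (x + 1) y) (some 2) := by
  have hgf := hP.countFalse_green
  obtain ⟨-, hgl, hrt, -, -⟩ := hP
  have := countFalse_take_le g (x + y + 1)
  have := countTrue_take_le r (x + y)
  have ht : x + y < m + n := by omega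
  have hx' : x ≤ countFalse (g.take (x + y)) := by
    rw [countFalse_take_succ g (by omega)] at hx; split at hx <;> omega
  have hC : (w ::ₘ unusedLabels r g x y).erase w
        + (stepLabels (r.getD (x + y) false) (g.getD (x + y) false) : Multiset ℕ)
      = 2 ::ₘ unusedLabels r g (x + 1) y := by
    rw [Multiset.erase_cons_head, unusedLabels_add_stepLabels hy hx' (by omega), unusedLabels,
      show x + 1 + y = x + y + 1 by omega, show countFalse (g.take (x + y + 1)) - x
        = countFalse (g.take (x + y + 1)) - (x + 1) + 1 by omega,
      Multiset.replicate_succ, Multiset.add_cons]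
  rw [drop_labelColumns ht, pmajGo_cons_some (v := 2), hC, show x + y + 1 = x + 1 + y by omega]
  · rw [hC]; exact Multiset.mem_cons_self _ _
  · rw [hC]
    refine hw.imp id fun hw a ha => ?_
    simp only [unusedLabels, Nat.add_right_comm x 1 y, Multiset.mem_cons, Multiset.mem_add,
      Multiset.mem_replicate] at ha
    omega

lemma IsRPolyo.pmajGo_north_step (hP : IsRPolyo m n r g) {x y w : ℕ}
    (hx : x ≤ countFalse (g.take (x + y))) (hy : y < countTrue (r.take (x + y + 1)))
    (hw : w = 1 ∨ countFalse (g.take (x + y + 1)) ≤ x) :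
    pmajGo ((labelColumns r g (m + n)).drop (x + y)) (w ::ₘ unusedLabels r g x y) (some w)
      = 1 :: pmajGo ((labelColumns r g (m + n)).drop (x + (y + 1)))
          (1 ::ₘ unusedLabels r g x (y + 1)) (some 1) := by
  have hgf := hP.countFalse_green
  obtain ⟨-, hgl, hrt, -, -⟩ := hP
  have := countFalse_take_le g (x + y)
  have := countTrue_take_le r (x + y + 1)
  have ht : x + y < m + n := by omega
  have hy' : y ≤ countTrue (r.take (x + y)) := by
    rw [countTrue_take_succ] at hy; split at hy <;> omega
  have hC : (w ::ₘ unusedLabels r g x y).erase w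
        + (stepLabels (r.getD (x + y) false) (g.getD (x + y) false) : Multiset ℕ)
      = 1 ::ₘ unusedLabels r g x (y + 1) := by
    rw [Multiset.erase_cons_head, unusedLabels_add_stepLabels hy' hx (by omega), unusedLabels,
      show x + (y + 1) = x + y + 1 by omega, show countTrue (r.take (x + y + 1)) - y
        = countTrue (r.take (x + y + 1)) - (y + 1) + 1 by omega,
      Multiset.replicate_succ, Multiset.cons_add]
  rw [drop_labelColumns ht, pmajGo_cons_some (v := 1), hC, show x + y + 1 = x + (y + 1) by omega]
  · rw [hC]; exact Multiset.mem_cons_self _ _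
  · rw [hC]
    refine hw.imp id fun hw a ha => ?_
    simp only [unusedLabels, show x + (y + 1) = x + y + 1 by omega, Multiset.mem_cons,
      Multiset.mem_add, Multiset.mem_replicate] at ha
    omega

lemma IsRPolyo.pmajGo_east_run (hP : IsRPolyo m n r g) {y : ℕ} :
    ∀ (s x w : ℕ), y ≤ countTrue (r.take (x + y)) → (∀ j < s, x + j < colX g y) →
      (w = 2 ∨ countTrue (r.take (x + y + 1)) ≤ y) →
      ∃ w', pmajGo ((labelColumns r g (m + n)).drop (x + y))
          (w ::ₘ unusedLabels r g x y) (some w)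
        = List.replicate s 2 ++ pmajGo ((labelColumns r g (m + n)).drop (x + s + y))
            (w' ::ₘ unusedLabels r g (x + s) y) (some w')
  | 0, x, w, _, _, _ => ⟨w, by simp⟩
  | s + 1, x, w, hy, hs, hw => by
    have hx := (lt_colX_iff g x y).1 (by simpa using hs 0 (Nat.succ_pos s))
    obtain ⟨w', hrun⟩ := hP.pmajGo_east_run s (x + 1) 2
      ((hy.trans (countTrue_take_mono r (by omega))))
      (fun j hj => by simpa [Nat.add_right_comm x 1 j, Nat.add_assoc] using hs (j + 1) (by omega))
      (Or.inl rfl)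
    refine ⟨w', ?_⟩
    rw [hP.pmajGo_east_step hy hx hw, hrun, Nat.add_right_comm x 1 s, Nat.add_assoc x s 1]
    rfl

lemma IsRPolyo.pmajGo_north_run (hP : IsRPolyo m n r g) {x : ℕ} :
    ∀ (s y w : ℕ), x ≤ countFalse (g.take (x + y)) → (∀ j < s, y + j < colHeight r x) →
      (w = 1 ∨ countFalse (g.take (x + y + 1)) ≤ x) →
      ∃ w', pmajGo ((labelColumns r g (m + n)).drop (x + y))
          (w ::ₘ unusedLabels r g x y) (some w)
        = List.replicate s 1 ++ pmajGo ((labelColumns r g (m + n)).drop (x + (y + s)))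
            (w' ::ₘ unusedLabels r g x (y + s)) (some w')
  | 0, y, w, _, _, _ => ⟨w, by simp⟩
  | s + 1, y, w, hx, hs, hw => by
    have hy := (lt_colHeight_iff r x y).1 (by simpa using hs 0 (Nat.succ_pos s))
    obtain ⟨w', hrun⟩ := hP.pmajGo_north_run s (y + 1) 1
      ((hx.trans (countFalse_take_mono g (by omega))))
      (fun j hj => by simpa [Nat.add_right_comm y 1 j, Nat.add_assoc] using hs (j + 1) (by omega))
      (Or.inl rfl)
    refine ⟨w', ?_⟩
    rw [hP.pmajGo_north_step hx hy hw, hrun, Nat.add_right_comm y 1 s, Nat.add_assoc y s 1]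
    rfl

end Walk

section BouncePath

variable {m n : ℕ} {r g : List Bool}

lemma bRunsRedAux_succ (fuel x y : ℕ) :
    bRunsRedAux r g (fuel + 1) x y
      = if colX g y = x ∧ colHeight r (colX g y) = y then []
        else (colX g y - x) :: (colHeight r (colX g y) - y)
          :: bRunsRedAux r g fuel (colX g y) (colHeight r (colX g y)) := rfl

theorem IsRPolyo.pmajGo_eq_bounceWord (hP : IsRPolyo m n r g) :
    ∀ (fuel x y w : ℕ), m + n < fuel + (x + y) → x ≤ colX g y → y ≤ colHeight r x →
      (w = 2 ∨ colHeight r x ≤ y) →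
      pmajGo ((labelColumns r g (m + n)).drop (x + y)) (w ::ₘ unusedLabels r g x y) (some w)
        = bounceWord (bRunsRedAux r g fuel x y)
  | 0, x, y, _, hfuel, hx, hy, _ => by
    have := hP.colX_le y
    have := hP.colHeight_le x
    omega
  | fuel + 1, x, y, w, hfuel, hx, hy, hw => by
    rw [bRunsRedAux_succ]
    split_ifs with hfix
    · obtain ⟨rfl, rfl⟩ := hP.eq_of_colX_eq_of_colHeight_eq hfix.1 (hfix.1 ▸ hfix.2)
      rw [List.drop_eq_nil_of_le (by simp [labelColumns])]
      rfl
    set x' := colX g y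
    set y' := colHeight r x'
    have hyy' : y ≤ y' := hy.trans (colHeight_mono r hx)
    obtain ⟨w₁, heast⟩ := hP.pmajGo_east_run (x' - x) x w
      (le_countTrue_take_of_le_colHeight hy) (fun j hj => by omega)
      (hw.imp id countTrue_take_le_of_colHeight_le)
    obtain ⟨w₂, hnorth⟩ := hP.pmajGo_north_run (x := x') (y' - y) y w₁
      (le_countFalse_take_of_le_colX le_rfl) (fun j hj => by omega)
      (Or.inr (countFalse_take_le_of_colX_le le_rfl))
    rw [heast, Nat.add_sub_cancel' hx, hnorth, Nat.add_sub_cancel' hyy',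
      pmajGo_eq_bounceWord hP fuel x' y' w₂ (by omega) (colX_mono g hyy') le_rfl (Or.inr le_rfl)]
    simp [bounceWord]

lemma innerRunsPos_bRunsRedAux (r g : List Bool) :
    ∀ (fuel x y : ℕ), x ≤ colX g y → y ≤ colHeight r x →
      InnerRunsPos (bRunsRedAux r g fuel x y)
  | 0, _, _, _, _ => trivial
  | fuel + 1, x, y, hx, hy => by
    rw [bRunsRedAux_succ]
    split_ifs with hfix
    · trivial
    set x' := colX g y
    set y' := colHeight r x'
    have hyy' : y ≤ y' := hy.trans (colHeight_mono r hx)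
    refine ⟨innerRunsPos_bRunsRedAux r g fuel x' y' (colX_mono g hyy') le_rfl, fun hne => ?_⟩
    cases fuel with
    | zero => exact absurd rfl hne
    | succ fuel =>
      rw [bRunsRedAux_succ] at hne ⊢
      split_ifs at hne ⊢ with hfix'
      · exact absurd rfl hne
      have hmove : colX g y' ≠ x' := fun h => hfix' ⟨h, by rw [h]⟩
      have := colX_mono g hyy'
      refine ⟨Nat.sub_pos_of_lt (lt_of_le_of_ne hyy' fun h => hmove (by rw [← h])), ?_⟩
      simp only [List.headD_cons]
      omega

end BouncePath

/-- For every reduced parallelogram polyomino `P` of size `m × n`,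
`bounce(P) = pmaj(ψ(P))`. -/
theorem bounce_eq_pmaj_psi (m n : ℕ) (r g : List Bool) (h : IsRPolyo m n r g) :
    bounceRed r g = pmajOfCols (psiCols r g) := by
  have hunused : unusedLabels r g 0 0 = 0 := by simp [unusedLabels]
  have hwalk := h.pmajGo_eq_bounceWord (m + n + 1) 0 0 2 (by omega) (Nat.zero_le _)
    (Nat.zero_le _) (Or.inl rfl)
  rw [Nat.add_zero, List.drop_zero, hunused, Multiset.cons_zero] at hwalk
  rw [pmajOfCols, psiCols_eq h, pmajGo_zero_none le_two_of_mem_labelColumns, hwalk,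
    majL_reverse_bounceWord _ (innerRunsPos_bRunsRedAux r g _ 0 0 (Nat.zero_le _) (Nat.zero_le _)),
    bounceRed, h.1]
  rfl
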